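/- Let p and q be distinct primes, let ω_p = e^{2πi/p}, ω_q = e^{2πi/q}, and let b_0, …, b_{q−1} be integers. If (1 − ω_p) divides Σ_{i=0}^{q−1} b_i ω_q^i in the ring of integers ℤ[ω_{pq}] of the cyclotomic field ℚ(ω_{pq}), then in fact p divides Σ_{i=0}^{q−1} b_i ω_q^i in ℤ[ω_{pq}]. -/

import Mathlib

/-- `primRoot m` is the primitive `m`-th root of unity `e^{2πi/m}`. -/
noncomputable def primRoot (m : ℕ) : ℂ :=
  Complex.exp (2 * Real.pi * Complex.I / m)

/-!
Write `γ = g ζ` with `ζ = ω_{pq}`, `g ∈ ℤ[X]`, and `f = ∑ bᵢ Xⁱ`. Since `ω_q = ζ ^ p` and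
`ω_p = ζ ^ q`, the polynomial `f (X ^ p) - (1 - X ^ q) g` vanishes at `ζ`, so it is divisible by
`Φ_{pq}`. Reducing modulo `(Φ_q, p)` and substituting for `X` a `p`-th root of `X` that is again a
root of `Φ_q` shows `f ∈ (Φ_q, p)`; evaluating at `ω_q` gives `f ω_q ∈ p ℤ[ω_q]`.
-/

open Polynomial

lemma primRoot_mul_pow {m n : ℕ} (hm : m ≠ 0) (hn : n ≠ 0) :
    primRoot (m * n) ^ n = primRoot m := by
  rw [primRoot, primRoot, ← Complex.exp_nat_mul]
  congr 1
  push_cast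
  field_simp

lemma isPrimitiveRoot_primRoot {m : ℕ} (hm : m ≠ 0) : IsPrimitiveRoot (primRoot m) m :=
  Complex.isPrimitiveRoot_exp m hm

namespace IsPrimitiveRoot

lemma aeval_cyclotomic_eq_zero {R : Type*} [CommRing R] [IsDomain R] {μ : R} {n : ℕ}
    (hμ : IsPrimitiveRoot μ n) (hn : 0 < n) : aeval μ (cyclotomic n ℤ) = 0 := by
  rw [aeval_def, eval₂_eq_eval_map, map_cyclotomic]
  exact hμ.isRoot_cyclotomic hn

lemma cyclotomic_dvd_of_aeval_eq_zero {K : Type*} [Field K] [CharZero K] {μ : K} {n : ℕ}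
    (hμ : IsPrimitiveRoot μ n) (hn : 0 < n) {P : ℤ[X]}
    (hP : aeval μ P = 0) : cyclotomic n ℤ ∣ P := by
  rw [cyclotomic_eq_minpoly hμ hn]
  exact minpoly.isIntegrallyClosed_dvd (hμ.isIntegral hn) hP

end IsPrimitiveRoot

namespace Polynomial

lemma cyclotomic_dvd_comp_X_pow {n a : ℕ} (hn : 0 < n) (ha : a.Coprime n) :
    cyclotomic n ℤ ∣ (cyclotomic n ℤ).comp (X ^ a) := by
  have hμ := Complex.isPrimitiveRoot_exp n hn.ne'
  apply hμ.cyclotomic_dvd_of_aeval_eq_zero hn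
  rw [aeval_comp, map_pow, aeval_X]
  exact (hμ.pow_of_coprime a ha).aeval_cyclotomic_eq_zero hn

lemma pow_eq_one_of_aeval_cyclotomic_eq_zero {R : Type*} [CommRing R] {n : ℕ} {y : R}
    (hy : aeval y (cyclotomic n ℤ) = 0) : y ^ n = 1 := by
  obtain ⟨w, hw⟩ := cyclotomic.dvd_X_pow_sub_one n ℤ
  have := congrArg (aeval y) hw
  rwa [map_sub, map_pow, aeval_X, map_one, map_mul, hy, zero_mul, sub_eq_zero] at this

lemma C_dvd_cyclotomic_mul_sub_pow {p n : ℕ} (hp : p.Prime) (hpn : ¬p ∣ n) :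
    C (p : ℤ) ∣ cyclotomic (n * p) ℤ - cyclotomic n ℤ ^ (p - 1) := by
  have : Fact p.Prime := ⟨hp⟩
  have hmap : (cyclotomic (n * p) ℤ - cyclotomic n ℤ ^ (p - 1)).map (Int.castRingHom (ZMod p))
      = 0 := by
    rw [Polynomial.map_sub, Polynomial.map_pow, map_cyclotomic, map_cyclotomic,
      cyclotomic_mul_prime_eq_pow_of_not_dvd _ hpn, sub_self]
  rw [C_dvd_iff_dvd_coeff]
  intro i
  rw [← ZMod.intCast_zmod_eq_zero_iff_dvd, ← eq_intCast (Int.castRingHom (ZMod p)), ← coeff_map,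
    hmap, coeff_zero]

/- By Euler's theorem `z = y ^ p ^ (φ q - 1)` is a `p`-th root of `y`, and it is again a root of
`cyclotomic q`. As `cyclotomic (p * q) ≡ cyclotomic q ^ (p - 1) (mod p)`, substituting `X ↦ z`
kills the left side of `h`, while it sends `f (X ^ p)` to `f y` and `1 - X ^ q` to `0`. -/
theorem aeval_eq_zero_of_cyclotomic_mul_dvd {R : Type*} [CommRing R] {p q : ℕ} (hp : p.Prime)
    (hpq : p.Coprime q) {y : R} (hpR : (p : R) = 0) (hy : aeval y (cyclotomic q ℤ) = 0)
    {f g : ℤ[X]} (h : cyclotomic (p * q) ℤ ∣ f.comp (X ^ p) - (1 - X ^ q) * g) :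
    aeval y f = 0 := by
  have hq : 0 < q := Nat.pos_of_ne_zero <| by
    rintro rfl
    exact hp.one_lt.ne' (Nat.coprime_zero_right p |>.mp hpq)
  have hyq := pow_eq_one_of_aeval_cyclotomic_eq_zero hy
  set z := y ^ p ^ (Nat.totient q - 1)
  have hzp : z ^ p = y := by
    rw [← pow_mul, ← pow_succ, Nat.sub_add_cancel (Nat.totient_pos.2 hq),
      pow_eq_pow_of_modEq (Nat.ModEq.pow_totient hpq) hyq, pow_one]
  have hzq : z ^ q = 1 := by rw [← pow_mul, mul_comm, pow_mul, hyq, one_pow]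
  have hzΦq : aeval z (cyclotomic q ℤ) = 0 := by
    obtain ⟨w, hw⟩ := cyclotomic_dvd_comp_X_pow hq (hpq.pow_left _)
    have := congrArg (aeval y) hw
    rwa [aeval_comp, map_pow, aeval_X, map_mul, hy, zero_mul] at this
  have hzΦpq : aeval z (cyclotomic (p * q) ℤ) = 0 := by
    obtain ⟨d, hd⟩ := C_dvd_cyclotomic_mul_sub_pow hp (hp.coprime_iff_not_dvd.1 hpq)
    rw [sub_eq_iff_eq_add] at hd
    rw [mul_comm, hd, map_add, map_mul, map_pow, aeval_C, hzΦq,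
      zero_pow (Nat.sub_ne_zero_of_lt hp.one_lt), eq_intCast, Int.cast_natCast, hpR, zero_mul,
      add_zero]
  obtain ⟨k, hk⟩ := h
  have := congrArg (aeval z) hk
  rwa [map_mul, hzΦpq, zero_mul, map_sub, aeval_comp, map_mul, map_sub, map_pow, aeval_X, hzp,
    map_one, map_pow, aeval_X, hzq, sub_self, zero_mul, sub_zero] at this

theorem mem_span_cyclotomic_of_cyclotomic_mul_dvd {p q : ℕ} (hp : p.Prime) (hpq : p.Coprime q)
    {f g : ℤ[X]} (h : cyclotomic (p * q) ℤ ∣ f.comp (X ^ p) - (1 - X ^ q) * g) :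
    f ∈ Ideal.span {cyclotomic q ℤ, C (p : ℤ)} := by
  set I := Ideal.span {cyclotomic q ℤ, C (p : ℤ)}
  have hmk (u : ℤ[X]) : aeval (Ideal.Quotient.mk I X) u = Ideal.Quotient.mk I u := by
    simpa using aeval_algHom_apply (Ideal.Quotient.mkₐ ℤ I) X u
  rw [← Ideal.Quotient.eq_zero_iff_mem, ← hmk]
  refine aeval_eq_zero_of_cyclotomic_mul_dvd hp hpq ?_ ?_ h
  · simpa using Ideal.Quotient.eq_zero_iff_mem.2 (Ideal.subset_span (by simp) : C (p : ℤ) ∈ I)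
  · exact (hmk _).trans (Ideal.Quotient.eq_zero_iff_mem.2 (Ideal.subset_span (by simp)))

end Polynomial

theorem stmt_6 (p q : ℕ) (hp : p.Prime) (hq : q.Prime) (hne : p ≠ q)
    (b : ℕ → ℤ)
    (hdvd : ∃ γ ∈ Algebra.adjoin ℤ ({primRoot (p * q)} : Set ℂ),
      (∑ i ∈ Finset.range q, (b i : ℂ) * primRoot q ^ i) = (1 - primRoot p) * γ) :
    ∃ γ ∈ Algebra.adjoin ℤ ({primRoot (p * q)} : Set ℂ),
      (∑ i ∈ Finset.range q, (b i : ℂ) * primRoot q ^ i) = (p : ℂ) * γ := by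
  have hpq : p.Coprime q := (Nat.coprime_primes hp hq).2 hne
  have hpq₀ : 0 < p * q := Nat.mul_pos hp.pos hq.pos
  have hζp : primRoot (p * q) ^ p = primRoot q :=
    mul_comm q p ▸ primRoot_mul_pow hq.ne_zero hp.ne_zero
  have hζq : primRoot (p * q) ^ q = primRoot p := primRoot_mul_pow hp.ne_zero hq.ne_zero
  set ζ := primRoot (p * q)
  have hζ : IsPrimitiveRoot ζ (p * q) := isPrimitiveRoot_primRoot hpq₀.ne'
  set f : ℤ[X] := ∑ i ∈ Finset.range q, C (b i) * X ^ i
  have hf (z : ℂ) : aeval z f = ∑ i ∈ Finset.range q, (b i : ℂ) * z ^ i := by simp [f]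
  obtain ⟨γ, hγ, hsum⟩ := hdvd
  obtain ⟨g, rfl⟩ := (Algebra.adjoin_singleton_eq_range_aeval ℤ ζ) ▸ hγ
  have hF : cyclotomic (p * q) ℤ ∣ f.comp (X ^ p) - (1 - X ^ q) * g := by
    refine hζ.cyclotomic_dvd_of_aeval_eq_zero hpq₀ ?_
    simp [aeval_comp, hζp, hζq, hf, hsum]
  obtain ⟨u, v, huv⟩ := Ideal.mem_span_pair.1 (mem_span_cyclotomic_of_cyclotomic_mul_dvd hp hpq hF)
  refine ⟨aeval ζ (v.comp (X ^ p)), aeval_mem_adjoin_singleton ℤ ζ, ?_⟩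
  rw [← hf, ← huv, aeval_comp, map_pow, aeval_X, hζp, map_add, map_mul, map_mul,
    (isPrimitiveRoot_primRoot hq.ne_zero).aeval_cyclotomic_eq_zero hq.pos, aeval_C]
  simp [mul_comm]
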